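/- With the same setup (T strongly slide-free minimal, T' reduced minimal, same elliptic subgroups, f the equivariant linear map): if e_1, e_2, e_3 are three consecutive edges of T (e_1, e_2 share a vertex v_1, and e_2, e_3 share a different vertex v_2), then f(e_1) ∩ f(e_2) ∩ f(e_3) = ∅. -/

import Mathlib

open SimpleGraph

section GTree

variable (G : Type*) [Group G]

/-- The group action preserves adjacency: `G` acts on the graph by automorphisms. -/
def ActsOnGraph {V : Type*} [MulAction G V] (T : SimpleGraph V) : Prop :=
  ∀ (g : G) (u v : V), T.Adj u v → T.Adj (g • u) (g • v)

/-- The action is without inversions: no element exchanges the two endpoints of an edge. -/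
def NoInversions {V : Type*} [MulAction G V] (T : SimpleGraph V) : Prop :=
  ∀ (g : G) (u v : V), T.Adj u v → ¬(g • u = v ∧ g • v = u)

/-- A subgroup is elliptic if it fixes a vertex. -/
def IsElliptic (V : Type*) [MulAction G V] (H : Subgroup G) : Prop :=
  ∃ v : V, ∀ h ∈ H, h • v = v

/-- The stabilizer of the edge with endpoints `u`, `v` (for an action without
inversions this is the pointwise stabilizer of the edge). -/
def edgeStab {V : Type*} [MulAction G V] (u v : V) : Subgroup G :=
  MulAction.stabilizer G u ⊓ MulAction.stabilizer G v

/-- The set of vertices on the unique path between two vertices of a tree. -/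
noncomputable def seg {V : Type*} {T : SimpleGraph V} (hT : T.IsTree) (x y : V) : Set V :=
  {z | z ∈ ((hT.existsUnique_path x y).exists.choose).support}

/-- A set of vertices is a subtree if it contains the arc between any two of its points. -/
def IsSubtree {V : Type*} {T : SimpleGraph V} (hT : T.IsTree) (S : Set V) : Prop :=
  ∀ x ∈ S, ∀ y ∈ S, seg hT x y ⊆ S

/-- A set of vertices is invariant under the group action. -/
def GInvariant {V : Type*} [MulAction G V] (S : Set V) : Prop :=
  ∀ (g : G), ∀ v ∈ S, g • v ∈ S

/-- The action is minimal: there is no proper nonempty invariant subtree. -/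
def MinimalAction {V : Type*} [MulAction G V] {T : SimpleGraph V} (hT : T.IsTree) : Prop :=
  ∀ S : Set V, S.Nonempty → GInvariant G S → IsSubtree hT S → S = Set.univ

/-- Strongly slide-free: if two edges at a common vertex `v` have nested
stabilizers, they are in the same `G_v`-orbit. -/
def StronglySlideFree {V : Type*} [MulAction G V] (T : SimpleGraph V) : Prop :=
  ∀ v a b : V, T.Adj v a → T.Adj v b → edgeStab G v a ≤ edgeStab G v b →
    ∃ g ∈ MulAction.stabilizer G v, g • a = b

/-- Reduced: for every edge whose stabilizer equals the stabilizer of one of its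
endpoints, the two endpoints are in the same `G`-orbit. -/
def Reduced {V : Type*} [MulAction G V] (T : SimpleGraph V) : Prop :=
  ∀ u v : V, T.Adj u v → edgeStab G u v = MulAction.stabilizer G v → ∃ g : G, g • u = v

end GTree

/-!
Let `p` be a common point of the three image arcs. Its stabilizer is elliptic in `T'`, hence also
in `T`: it fixes a vertex `q`. Up to symmetry `v₁` lies on the arc `[v₂, q]`. The stabilizer of
`e₃` fixes `f v₂` and `f x`, hence `p`, hence `q` and the arc `[v₂, q]`, so it fixes `e₂`. Strong
slide-freeness then gives `γ ∈ G_{v₂}` with `γ x = v₁`. Since `γ` fixes `f v₂` and maps `f x` to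
`f v₁`, it fixes `p`, hence `q`, hence `v₁ = γ x`: so `x = v₁`, a contradiction.
-/

section Tree

variable {V : Type*} {T : SimpleGraph V}

noncomputable def treePath (hT : T.IsTree) (x y : V) : T.Walk x y :=
  (hT.existsUnique_path x y).exists.choose

variable (hT : T.IsTree)

lemma treePath_isPath (x y : V) : (treePath hT x y).IsPath :=
  (hT.existsUnique_path x y).exists.choose_spec

lemma eq_treePath_of_isPath {x y : V} {p : T.Walk x y} (hp : p.IsPath) : p = treePath hT x y :=
  (hT.existsUnique_path x y).unique hp (treePath_isPath hT x y)

lemma mem_seg_iff {x y z : V} : z ∈ seg hT x y ↔ z ∈ (treePath hT x y).support := Iff.rfl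

lemma seg_comm (x y : V) : seg hT x y = seg hT y x := by
  ext z
  rw [mem_seg_iff, mem_seg_iff, ← eq_treePath_of_isPath hT (treePath_isPath hT x y).reverse,
    Walk.support_reverse, List.mem_reverse]

lemma getVert_length_treePath {x y z : V} (hz : z ∈ seg hT x y) :
    (treePath hT x y).getVert (treePath hT x z).length = z := by
  classical
  rw [← eq_treePath_of_isPath hT ((treePath_isPath hT x y).takeUntil hz)]
  exact Walk.getVert_length_takeUntil hz

lemma eq_of_mem_seg_of_length_treePath_eq {x y z₁ z₂ : V} (h₁ : z₁ ∈ seg hT x y)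
    (h₂ : z₂ ∈ seg hT x y) (hl : (treePath hT x z₁).length = (treePath hT x z₂).length) :
    z₁ = z₂ := by
  rw [← getVert_length_treePath hT h₁, ← getVert_length_treePath hT h₂, hl]

lemma mem_seg_or_mem_seg_of_adj {a b : V} (hab : T.Adj a b) (q : V) :
    a ∈ seg hT b q ∨ b ∈ seg hT a q := by
  by_cases hb : b ∈ seg hT a q
  · exact Or.inr hb
  · left
    have hpath : (Walk.cons hab.symm (treePath hT a q)).IsPath :=
      (treePath_isPath hT a q).cons hb
    rw [mem_seg_iff, ← eq_treePath_of_isPath hT hpath]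
    exact List.mem_cons_of_mem _ (Walk.start_mem_support _)

section Action

variable {G : Type*} [Group G] [MulAction G V]

def ActsOnGraph.hom (hact : ActsOnGraph G T) (g : G) : T →g T :=
  ⟨(g • ·), hact g _ _⟩

lemma ActsOnGraph.hom_injective (hact : ActsOnGraph G T) (g : G) :
    Function.Injective (hact.hom g) :=
  MulAction.injective g

lemma treePath_smul (hact : ActsOnGraph G T) (g : G) (x y : V) :
    treePath hT (g • x) (g • y) = (treePath hT x y).map (hact.hom g) :=
  (eq_treePath_of_isPath hT ((treePath_isPath hT x y).map (hact.hom_injective g))).symm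

lemma length_treePath_smul (hact : ActsOnGraph G T) (g : G) (x y : V) :
    (treePath hT (g • x) (g • y)).length = (treePath hT x y).length := by
  rw [treePath_smul hT hact]
  exact Walk.length_map _ _

lemma smul_mem_seg (hact : ActsOnGraph G T) {g : G} {x y z : V} (h : z ∈ seg hT x y) :
    g • z ∈ seg hT (g • x) (g • y) := by
  rw [mem_seg_iff, treePath_smul hT hact]
  exact (Walk.support_map _ _).symm ▸ List.mem_map_of_mem h

/-- Points of an arc are determined by their distance to its origin `a`, which `γ` preserves. -/
lemma smul_eq_of_mem_seg_of_mem_seg (hact : ActsOnGraph G T) {γ : G} {a b c z : V}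
    (hγa : γ • a = a) (hγb : γ • b = c) (hb : z ∈ seg hT a b) (hc : z ∈ seg hT a c) :
    γ • z = z := by
  have hmem : γ • z ∈ seg hT a c := by
    simpa only [hγa, hγb] using smul_mem_seg hT hact (g := γ) hb
  have hlen : (treePath hT a (γ • z)).length = (treePath hT a z).length := by
    have h := length_treePath_smul hT hact γ a z
    rwa [hγa] at h
  exact eq_of_mem_seg_of_length_treePath_eq hT hmem hc hlen

lemma smul_eq_of_mem_seg (hact : ActsOnGraph G T) {g : G} {x y z : V} (hx : g • x = x)
    (hy : g • y = y) (hz : z ∈ seg hT x y) : g • z = z :=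
  smul_eq_of_mem_seg_of_mem_seg hT hact hx hy hz hz

/-- Here `b` is the first vertex after `v` on the arc from `v` to `q`. -/
lemma StronglySlideFree.exists_smul_eq_of_mem_seg (hact : ActsOnGraph G T)
    (hssf : StronglySlideFree G T) {v a b q : V} (ha : T.Adj v a) (hb : T.Adj v b)
    (hbq : b ∈ seg hT v q) (hq : ∀ g ∈ edgeStab G v a, g • q = q) :
    ∃ γ ∈ MulAction.stabilizer G v, γ • a = b :=
  hssf v a b ha hb fun g hg => ⟨hg.1, smul_eq_of_mem_seg hT hact hg.1 (hq g hg) hbq⟩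

end Action

end Tree

lemma notMem_seg_of_mem_seg_image {G V V' : Type*} [Group G] [MulAction G V] [MulAction G V']
    {T : SimpleGraph V} {T' : SimpleGraph V'} (hT : T.IsTree) (hT' : T'.IsTree)
    (hact : ActsOnGraph G T) (hact' : ActsOnGraph G T') (hssf : StronglySlideFree G T)
    {f : V → V'} (hequi : ∀ (g : G) (v : V), f (g • v) = g • f v)
    (hfixf : ∀ v : V, ∀ g ∈ MulAction.stabilizer G v, g • f v = f v)
    {v a b q : V} {p : V'} (ha : T.Adj v a) (hb : T.Adj v b) (hab : a ≠ b)
    (hpa : p ∈ seg hT' (f v) (f a)) (hpb : p ∈ seg hT' (f v) (f b))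
    (hq : ∀ g ∈ MulAction.stabilizer G p, g • q = q) : b ∉ seg hT v q := by
  intro hbq
  obtain ⟨γ, hγv, hγa⟩ := hssf.exists_smul_eq_of_mem_seg hT hact ha hb hbq fun g hg =>
    hq g (smul_eq_of_mem_seg hT' hact' (hfixf v g hg.1) (hfixf a g hg.2) hpa)
  have hγp : γ • p = p :=
    smul_eq_of_mem_seg_of_mem_seg hT' hact' (hfixf v γ hγv) (by rw [← hequi, hγa]) hpa hpb
  have hγb : γ • b = b := smul_eq_of_mem_seg hT hact hγv (hq γ hγp) hbq
  exact hab (MulAction.injective γ (hγa.trans hγb.symm))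

theorem image_three_consecutive_edges_general {G V V' : Type*} [Group G] [MulAction G V] [MulAction G V']
    {T : SimpleGraph V} {T' : SimpleGraph V'} (hT : T.IsTree) (hT' : T'.IsTree)
    (hact : ActsOnGraph G T) (hact' : ActsOnGraph G T')
    (hell : ∀ H : Subgroup G, IsElliptic G V H ↔ IsElliptic G V' H)
    (hssf : StronglySlideFree G T)
    (f : V → V')
    (hequi : ∀ (g : G) (v : V), f (g • v) = g • f v)
    (hfixf : ∀ v : V, ∀ g ∈ MulAction.stabilizer G v, g • f v = f v)
    (w v₁ v₂ x : V) (h1 : T.Adj w v₁) (h2 : T.Adj v₁ v₂) (h3 : T.Adj v₂ x)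
    (hwv : w ≠ v₂) (hxv : x ≠ v₁) :
    seg hT' (f w) (f v₁) ∩ seg hT' (f v₁) (f v₂) ∩ seg hT' (f v₂) (f x) = ∅ := by
  rw [Set.eq_empty_iff_forall_notMem]
  rintro p ⟨⟨hp₁, hp₂⟩, hp₃⟩
  obtain ⟨q, hq⟩ : IsElliptic G V (MulAction.stabilizer G p) :=
    (hell _).mpr ⟨p, fun _ => MulAction.mem_stabilizer_iff.mp⟩
  rcases mem_seg_or_mem_seg_of_adj hT h2 q with hv₁ | hv₂
  · exact notMem_seg_of_mem_seg_image hT hT' hact hact' hssf hequi hfixf h3 h2.symm hxv hp₃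
      (seg_comm hT' _ _ ▸ hp₂) hq hv₁
  · exact notMem_seg_of_mem_seg_image hT hT' hact hact' hssf hequi hfixf h1.symm h2 hwv
      (seg_comm hT' _ _ ▸ hp₁) hp₂ hq hv₂

/-- Lemma 2: the images under `f` of three consecutive edges of `T` have empty
common intersection. -/
theorem image_three_consecutive_edges {G V V' : Type*} [Group G] [MulAction G V] [MulAction G V']
    {T : SimpleGraph V} {T' : SimpleGraph V'} (hT : T.IsTree) (hT' : T'.IsTree)
    (hact : ActsOnGraph G T) (hact' : ActsOnGraph G T')
    (hni : NoInversions G T) (hni' : NoInversions G T')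
    (hmin : MinimalAction G hT) (hmin' : MinimalAction G hT')
    (hell : ∀ H : Subgroup G, IsElliptic G V H ↔ IsElliptic G V' H)
    (hssf : StronglySlideFree G T) (hred' : Reduced G T')
    (f : V → V')
    (hequi : ∀ (g : G) (v : V), f (g • v) = g • f v)
    (hfixf : ∀ v : V, ∀ g ∈ MulAction.stabilizer G v, g • f v = f v)
    (hinj : Function.Injective f)
    (w v₁ v₂ x : V) (h1 : T.Adj w v₁) (h2 : T.Adj v₁ v₂) (h3 : T.Adj v₂ x)
    (hwv : w ≠ v₂) (hxv : x ≠ v₁) :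
    seg hT' (f w) (f v₁) ∩ seg hT' (f v₁) (f v₂) ∩ seg hT' (f v₂) (f x) = ∅ :=
  image_three_consecutive_edges_general hT hT' hact hact' hell hssf f hequi hfixf w v₁ v₂ x h1 h2 h3
    hwv hxv
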